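/- Under the hypotheses of the previous verification inequality, suppose additionally that equality V^λ_t + (V^λ_x·F + V^λ_ψ − γ)u − |Q|u² − λ = 0 holds at every point when u = μ*(t,x,ψ) := (V^λ_x(t,x,ψ)·F(x,ψ) + V^λ_ψ(t,x,ψ) − γ)/(2|Q(x,ψ)|), and that the trajectory (x(t),ψ(t)) is driven by μ(t) = μ*(t,x(t),ψ(t)). Then V^λ(s,y,φ) = (γ+λ)T + ∫_s^T ( −|Q(x(t),ψ(t))| μ(t)² − λ − γ μ(t) ) dt. -/

import Mathlib

/-!
Continuity of the partial derivatives makes `V` jointly (strictly) differentiable, so the chain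
rule applies along the trajectory. At the feedback control the HJB equality turns the derivative
of `t ↦ V(t, x(t), ψ(t))` into `|Q| μ² + λ + γ μ`; integrating from `s` to `T` and using the
terminal value gives the formula.
-/

open scoped RealInnerProductSpace
open ContinuousLinearMap

section PartialDerivatives

variable {E : Type*} [NormedAddCommGroup E] [InnerProductSpace ℝ E] [CompleteSpace E]

theorem hasStrictFDerivAt_uncurry_of_hasGradientAt_of_hasDerivAt
    {f : E → ℝ → ℝ} {fx : E → ℝ → E} {fψ : E → ℝ → ℝ}
    (hfx : ∀ x ψ, HasGradientAt (f · ψ) (fx x ψ) x)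
    (hfψ : ∀ x ψ, HasDerivAt (f x ·) (fψ x ψ) ψ)
    (hfxc : Continuous fun p : E × ℝ => fx p.1 p.2)
    (hfψc : Continuous fun p : E × ℝ => fψ p.1 p.2) (p : E × ℝ) :
    HasStrictFDerivAt (fun q : E × ℝ => f q.1 q.2)
      ((InnerProductSpace.toDual ℝ E (fx p.1 p.2) : E →L[ℝ] ℝ).coprod
        (toSpanSingleton ℝ (fψ p.1 p.2))) p :=
  hasStrictFDerivAt_uncurry_coprod (f₁ := fun x ψ => InnerProductSpace.toDual ℝ E (fx x ψ))
    (f₂ := fun x ψ => toSpanSingleton ℝ (fψ x ψ))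
    (.of_forall fun q => (hfx q.1 q.2).hasFDerivAt) (.of_forall fun q => (hfψ q.1 q.2).hasFDerivAt)
    ((InnerProductSpace.toDual ℝ E).continuous.comp hfxc).continuousAt
    ((toSpanSingletonLIE ℝ ℝ).continuous.comp hfψc).continuousAt

theorem hasStrictFDerivAt_uncurry₃_of_partials
    {f : ℝ → E → ℝ → ℝ} {ft : ℝ → E → ℝ → ℝ} {fx : ℝ → E → ℝ → E} {fψ : ℝ → E → ℝ → ℝ}
    (hft : ∀ t x ψ, HasDerivAt (f · x ψ) (ft t x ψ) t)
    (hfx : ∀ t x ψ, HasGradientAt (f t · ψ) (fx t x ψ) x)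
    (hfψ : ∀ t x ψ, HasDerivAt (f t x ·) (fψ t x ψ) ψ)
    (hftc : Continuous fun p : ℝ × E × ℝ => ft p.1 p.2.1 p.2.2)
    (hfxc : Continuous fun p : ℝ × E × ℝ => fx p.1 p.2.1 p.2.2)
    (hfψc : Continuous fun p : ℝ × E × ℝ => fψ p.1 p.2.1 p.2.2) (p : ℝ × E × ℝ) :
    HasStrictFDerivAt (fun q : ℝ × E × ℝ => f q.1 q.2.1 q.2.2)
      ((toSpanSingleton ℝ (ft p.1 p.2.1 p.2.2)).coprod
        ((InnerProductSpace.toDual ℝ E (fx p.1 p.2.1 p.2.2) : E →L[ℝ] ℝ).coprod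
          (toSpanSingleton ℝ (fψ p.1 p.2.1 p.2.2)))) p :=
  hasStrictFDerivAt_uncurry_coprod (u := p) (f := fun t q => f t q.1 q.2)
    (f₁ := fun t q => toSpanSingleton ℝ (ft t q.1 q.2))
    (f₂ := fun t q => (InnerProductSpace.toDual ℝ E (fx t q.1 q.2) : E →L[ℝ] ℝ).coprod
      (toSpanSingleton ℝ (fψ t q.1 q.2)))
    (.of_forall fun q => (hft q.1 q.2.1 q.2.2).hasFDerivAt)
    (.of_forall fun q => (hasStrictFDerivAt_uncurry_of_hasGradientAt_of_hasDerivAt (hfx q.1)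
      (hfψ q.1) (hfxc.comp (.prodMk_right q.1)) (hfψc.comp (.prodMk_right q.1)) q.2).hasFDerivAt)
    ((toSpanSingletonLIE ℝ ℝ).continuous.comp hftc).continuousAt
    ((coprodEquivL ℝ).continuous.comp (((InnerProductSpace.toDual ℝ E).continuous.comp hfxc).prodMk
      ((toSpanSingletonLIE ℝ ℝ).continuous.comp hfψc))).continuousAt

theorem hasDerivAt_comp_curve_of_partials
    {f : ℝ → E → ℝ → ℝ} {ft : ℝ → E → ℝ → ℝ} {fx : ℝ → E → ℝ → E} {fψ : ℝ → E → ℝ → ℝ}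
    (hft : ∀ t x ψ, HasDerivAt (f · x ψ) (ft t x ψ) t)
    (hfx : ∀ t x ψ, HasGradientAt (f t · ψ) (fx t x ψ) x)
    (hfψ : ∀ t x ψ, HasDerivAt (f t x ·) (fψ t x ψ) ψ)
    (hftc : Continuous fun p : ℝ × E × ℝ => ft p.1 p.2.1 p.2.2)
    (hfxc : Continuous fun p : ℝ × E × ℝ => fx p.1 p.2.1 p.2.2)
    (hfψc : Continuous fun p : ℝ × E × ℝ => fψ p.1 p.2.1 p.2.2)
    {x : ℝ → E} {ψ : ℝ → ℝ} {x' : E} {ψ' t : ℝ}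
    (hx : HasDerivAt x x' t) (hψ : HasDerivAt ψ ψ' t) :
    HasDerivAt (fun u => f u (x u) (ψ u))
      (ft t (x t) (ψ t) + ⟪fx t (x t) (ψ t), x'⟫ + fψ t (x t) (ψ t) * ψ') t := by
  have h := (hasStrictFDerivAt_uncurry₃_of_partials hft hfx hfψ hftc hfxc hfψc
    (t, x t, ψ t)).hasFDerivAt.comp_hasDerivAt t ((hasDerivAt_id t).prodMk (hx.prodMk hψ))
  simpa [Function.comp_def, mul_comm, add_assoc] using h

end PartialDerivatives

theorem verification_equality_general {d : ℕ} (T γ lam : ℝ)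
    (F Q : EuclideanSpace ℝ (Fin d) → ℝ → EuclideanSpace ℝ (Fin d))
    (hQ : Continuous fun p : EuclideanSpace ℝ (Fin d) × ℝ => Q p.1 p.2)
    (V : ℝ → EuclideanSpace ℝ (Fin d) → ℝ → ℝ)
    (Vt : ℝ → EuclideanSpace ℝ (Fin d) → ℝ → ℝ)
    (Vx : ℝ → EuclideanSpace ℝ (Fin d) → ℝ → EuclideanSpace ℝ (Fin d))
    (Vψ : ℝ → EuclideanSpace ℝ (Fin d) → ℝ → ℝ)
    (hVt : ∀ t x ψ, HasDerivAt (fun s => V s x ψ) (Vt t x ψ) t)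
    (hVx : ∀ t x ψ, HasGradientAt (fun y => V t y ψ) (Vx t x ψ) x)
    (hVψ : ∀ t x ψ, HasDerivAt (fun p => V t x p) (Vψ t x ψ) ψ)
    (hVtc : Continuous fun p : ℝ × EuclideanSpace ℝ (Fin d) × ℝ => Vt p.1 p.2.1 p.2.2)
    (hVxc : Continuous fun p : ℝ × EuclideanSpace ℝ (Fin d) × ℝ => Vx p.1 p.2.1 p.2.2)
    (hVψc : Continuous fun p : ℝ × EuclideanSpace ℝ (Fin d) × ℝ => Vψ p.1 p.2.1 p.2.2)
    -- terminal condition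
    (hterm : ∀ x ψ, V T x ψ = (γ + lam) * T)
    -- admissible trajectory driven by a continuous control μ
    (s : ℝ) (hs : s ∈ Set.Icc (0 : ℝ) T)
    (μ : ℝ → ℝ) (hμ : ContinuousOn μ (Set.Icc s T))
    (x : ℝ → EuclideanSpace ℝ (Fin d)) (ψ : ℝ → ℝ)
    (hx : ∀ t ∈ Set.Icc s T, HasDerivAt x (μ t • F (x t) (ψ t)) t)
    (hψ : ∀ t ∈ Set.Icc s T, HasDerivAt ψ (μ t) t)
    (y : EuclideanSpace ℝ (Fin d)) (φ : ℝ) (hxy : x s = y) (hψφ : ψ s = φ)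
    -- the HJB equality holds at the Hamiltonian maximizer
    (heq : ∀ (t : ℝ) (x' : EuclideanSpace ℝ (Fin d)) (ψ' : ℝ),
      Vt t x' ψ' +
        (⟪Vx t x' ψ', F x' ψ'⟫ + Vψ t x' ψ' - γ) *
          ((⟪Vx t x' ψ', F x' ψ'⟫ + Vψ t x' ψ' - γ) / (2 * ‖Q x' ψ'‖)) -
        ‖Q x' ψ'‖ * ((⟪Vx t x' ψ', F x' ψ'⟫ + Vψ t x' ψ' - γ) / (2 * ‖Q x' ψ'‖)) ^ 2 -
        lam = 0)
    -- the trajectory is driven by the feedback maximizer μ*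
    (hfeedback : ∀ t ∈ Set.Icc s T,
      μ t = (⟪Vx t (x t) (ψ t), F (x t) (ψ t)⟫ + Vψ t (x t) (ψ t) - γ) /
        (2 * ‖Q (x t) (ψ t)‖)) :
    V s y φ = (γ + lam) * T +
      ∫ t in s..T, (-‖Q (x t) (ψ t)‖ * (μ t) ^ 2 - lam - γ * μ t) := by
  rw [← Set.uIcc_of_le hs.2] at hμ hx hψ hfeedback
  have hderiv : ∀ t ∈ Set.uIcc s T, HasDerivAt (fun u => V u (x u) (ψ u))
      (-(-‖Q (x t) (ψ t)‖ * (μ t) ^ 2 - lam - γ * μ t)) t := by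
    intro t ht
    convert hasDerivAt_comp_curve_of_partials hVt hVx hVψ hVtc hVxc hVψc (hx t ht) (hψ t ht)
      using 1
    have hhjb := heq t (x t) (ψ t)
    rw [← hfeedback t ht] at hhjb
    rw [real_inner_smul_right]
    linear_combination -hhjb
  have hQc : ContinuousOn (fun t => ‖Q (x t) (ψ t)‖) (Set.uIcc s T) :=
    (hQ.comp_continuousOn ((HasDerivAt.continuousOn hx).prodMk (HasDerivAt.continuousOn hψ))).norm
  have hint : IntervalIntegrable (fun t => -(-‖Q (x t) (ψ t)‖ * μ t ^ 2 - lam - γ * μ t))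
      MeasureTheory.volume s T :=
    (((hQc.neg.mul (hμ.pow 2)).sub continuousOn_const).sub
      (continuousOn_const.mul hμ)).neg.intervalIntegrable
  have hftc := intervalIntegral.integral_eq_sub_of_hasDerivAt hderiv hint
  rw [intervalIntegral.integral_neg, hterm, hxy, hψφ] at hftc
  linarith

/-- Step 3 of the proof of Theorem 3.2: under the verification hypotheses, if the HJB
equality is attained at the feedback maximizer `μ* = (V_x·F + V_ψ − γ)/(2|Q|)` and the
trajectory is driven by `μ(t) = μ*(t,x(t),ψ(t))`, then
`V^λ(s,y,φ) = (γ+λ)T + ∫_s^T (−|Q|μ² − λ − γμ) dt`. -/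
theorem verification_equality {d : ℕ} (T γ lam : ℝ) (hT : 0 < T) (hlam : 0 ≤ lam)
    (F Q : EuclideanSpace ℝ (Fin d) → ℝ → EuclideanSpace ℝ (Fin d))
    (hF : Continuous fun p : EuclideanSpace ℝ (Fin d) × ℝ => F p.1 p.2)
    (hQ : Continuous fun p : EuclideanSpace ℝ (Fin d) × ℝ => Q p.1 p.2)
    (V : ℝ → EuclideanSpace ℝ (Fin d) → ℝ → ℝ)
    (Vt : ℝ → EuclideanSpace ℝ (Fin d) → ℝ → ℝ)
    (Vx : ℝ → EuclideanSpace ℝ (Fin d) → ℝ → EuclideanSpace ℝ (Fin d))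
    (Vψ : ℝ → EuclideanSpace ℝ (Fin d) → ℝ → ℝ)
    (hVt : ∀ t x ψ, HasDerivAt (fun s => V s x ψ) (Vt t x ψ) t)
    (hVx : ∀ t x ψ, HasGradientAt (fun y => V t y ψ) (Vx t x ψ) x)
    (hVψ : ∀ t x ψ, HasDerivAt (fun p => V t x p) (Vψ t x ψ) ψ)
    (hVtc : Continuous fun p : ℝ × EuclideanSpace ℝ (Fin d) × ℝ => Vt p.1 p.2.1 p.2.2)
    (hVxc : Continuous fun p : ℝ × EuclideanSpace ℝ (Fin d) × ℝ => Vx p.1 p.2.1 p.2.2)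
    (hVψc : Continuous fun p : ℝ × EuclideanSpace ℝ (Fin d) × ℝ => Vψ p.1 p.2.1 p.2.2)
    -- supersolution property of the exploratory HJB
    (hsuper : ∀ (t : ℝ) (x : EuclideanSpace ℝ (Fin d)) (ψ : ℝ) (u : ℝ),
      Vt t x ψ + (⟪Vx t x ψ, F x ψ⟫ + Vψ t x ψ - γ) * u - ‖Q x ψ‖ * u ^ 2 - lam ≤ 0)
    -- terminal condition
    (hterm : ∀ x ψ, V T x ψ = (γ + lam) * T)
    -- admissible trajectory driven by a continuous control μ
    (s : ℝ) (hs : s ∈ Set.Icc (0 : ℝ) T)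
    (μ : ℝ → ℝ) (hμ : ContinuousOn μ (Set.Icc s T))
    (x : ℝ → EuclideanSpace ℝ (Fin d)) (ψ : ℝ → ℝ)
    (hx : ∀ t ∈ Set.Icc s T, HasDerivAt x (μ t • F (x t) (ψ t)) t)
    (hψ : ∀ t ∈ Set.Icc s T, HasDerivAt ψ (μ t) t)
    (y : EuclideanSpace ℝ (Fin d)) (φ : ℝ) (hxy : x s = y) (hψφ : ψ s = φ)
    (hQpos : ∀ x' ψ', 0 < ‖Q x' ψ'‖)
    -- the HJB equality holds at the Hamiltonian maximizer
    (heq : ∀ (t : ℝ) (x' : EuclideanSpace ℝ (Fin d)) (ψ' : ℝ),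
      Vt t x' ψ' +
        (⟪Vx t x' ψ', F x' ψ'⟫ + Vψ t x' ψ' - γ) *
          ((⟪Vx t x' ψ', F x' ψ'⟫ + Vψ t x' ψ' - γ) / (2 * ‖Q x' ψ'‖)) -
        ‖Q x' ψ'‖ * ((⟪Vx t x' ψ', F x' ψ'⟫ + Vψ t x' ψ' - γ) / (2 * ‖Q x' ψ'‖)) ^ 2 -
        lam = 0)
    -- the trajectory is driven by the feedback maximizer μ*
    (hfeedback : ∀ t ∈ Set.Icc s T,
      μ t = (⟪Vx t (x t) (ψ t), F (x t) (ψ t)⟫ + Vψ t (x t) (ψ t) - γ) /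
        (2 * ‖Q (x t) (ψ t)‖)) :
    V s y φ = (γ + lam) * T +
      ∫ t in s..T, (-‖Q (x t) (ψ t)‖ * (μ t) ^ 2 - lam - γ * μ t) :=
  verification_equality_general T γ lam F Q hQ V Vt Vx Vψ hVt hVx hVψ hVtc hVxc hVψc hterm s hs μ hμ
    x ψ hx hψ y φ hxy hψφ heq hfeedback
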